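/- Let U be a set of unit-magnitude complex numbers that forms a subgroup of T/{±1}: 1 ∈ U, and for all α, β ∈ U one has αβ ∈ U or −αβ ∈ U, and α⁻¹ ∈ U or −α⁻¹ ∈ U. If U contains three elements that are pairwise non-±-equal, then R(U) is a subring of ℂ (it contains 0 and 1 and is closed under addition, negation, and multiplication). -/

import Mathlib

/-!
Every point of `R(U)` is a sum of two *axial* points of `R(U)`, i.e. points `c γ` with `c` real
and `γ ∈ U`: the intersection formula splits into its two summands, each lying on an axis.
Multiplication by an axial point `c γ` is a rotation by `γ` followed by a real scaling; it maps
the construction with directions `α, β` to the one with directions `±γα, ±γβ`, so it preserves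
`R(U)`. Translation commutes with every `I_{α,β}`, so to add an axial point to all of `R(U)` it
suffices to add it to `0` and `1`, and `1` is axial. Two axial points in transverse directions add
by a single intersection; in a common direction `γ` one projects `c γ` along a second direction
onto a third axis, adds `d γ` there by a transverse intersection, and projects back. Finally `-1` comes from a parallelogram construction,
and `-z = (-1) z`.
-/

open Complex

/-- The bracket `[x,y] = x * conj y - y * conj x`. -/
noncomputable def brkt (x y : ℂ) : ℂ := x * (starRingEnd ℂ) y - y * (starRingEnd ℂ) x

/-- `lineInt α β p q` is the intersection point `I_{α,β}(p,q)` of the line through `p`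
with direction `α` and the line through `q` with direction `β` (for unit `α ≠ ±β`),
given by the formula of Buhler et al. -/
noncomputable def lineInt (α β p q : ℂ) : ℂ :=
  brkt α p / brkt α β * β + brkt β q / brkt β α * α

/-- The sets `S n` in the inductive construction. -/
def stepSet (U : Set ℂ) : ℕ → Set ℂ
  | 0 => {0, 1}
  | n + 1 => {z | ∃ α ∈ U, ∃ β ∈ U, α ≠ β ∧ α ≠ -β ∧
      ∃ p ∈ stepSet U n, ∃ q ∈ stepSet U n, z = lineInt α β p q}

/-- `RU U = ⋃ n, S n`. -/
def RU (U : Set ℂ) : Set ℂ := ⋃ n, stepSet U n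

/-- Elementary monomials of `U`. -/
def IsElem (U : Set ℂ) (z : ℂ) : Prop :=
  ∃ α ∈ U, ∃ β ∈ U, α ≠ β ∧ α ≠ -β ∧ z = lineInt α β 0 1

/-- Monomials of `U`, defined inductively. -/
inductive IsMonomial (U : Set ℂ) : ℂ → Prop
  | elementary (α β : ℂ) (hα : α ∈ U) (hβ : β ∈ U) (h1 : α ≠ β) (h2 : α ≠ -β) :
      IsMonomial U (lineInt α β 0 1)
  | step (α β m : ℂ) (hα : α ∈ U) (hβ : β ∈ U) (h1 : α ≠ β) (h2 : α ≠ -β)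
      (hm : IsMonomial U m) : IsMonomial U (lineInt α β 0 m)

/-- `P`: the real numbers arising as length-two monomials `I_{γ,δ}(0,z)` on the real axis. -/
def projSet (U : Set ℂ) : Set ℝ :=
  {r | ∃ γ ∈ U, ∃ δ ∈ U, γ ≠ δ ∧ γ ≠ -δ ∧ ∃ z, IsElem U z ∧ (r : ℂ) = lineInt γ δ 0 z}

/-- `m` is a `ℤ[P]`-linear combination of elementary monomials of `U`. -/
def IsZPComb (U : Set ℂ) (m : ℂ) : Prop :=
  ∃ (n : ℕ) (c : Fin n → ℝ) (z : Fin n → ℂ),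
    (∀ i, c i ∈ Subring.closure (projSet U)) ∧ (∀ i, IsElem U (z i)) ∧
    m = ∑ i, (c i : ℂ) * z i

open ComplexConjugate

lemma mul_conj_eq_one {γ : ℂ} (hγ : ‖γ‖ = 1) : γ * conj γ = 1 := by
  rw [Complex.mul_conj', hγ]; norm_num

lemma brkt_swap (x y : ℂ) : brkt y x = -brkt x y := by
  unfold brkt; ring

lemma conj_brkt (x y : ℂ) : conj (brkt x y) = -brkt x y := by
  simp only [brkt, map_sub, map_mul, conj_conj]; ring

lemma conj_brkt_div (x y z w : ℂ) : conj (brkt x y / brkt z w) = brkt x y / brkt z w := by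
  rw [map_div₀, conj_brkt, conj_brkt, neg_div_neg_eq]

lemma brkt_add_right (x p q : ℂ) : brkt x (p + q) = brkt x p + brkt x q := by
  simp only [brkt, map_add]; ring

lemma brkt_mul_right {c : ℂ} (hc : conj c = c) (x y : ℂ) : brkt x (c * y) = c * brkt x y := by
  simp only [brkt, map_mul, hc]; ring

lemma brkt_neg_left (x y : ℂ) : brkt (-x) y = -brkt x y := by
  simp only [brkt, map_neg]; ring

lemma brkt_neg_right (x y : ℂ) : brkt x (-y) = -brkt x y := by
  simp only [brkt, map_neg]; ring

lemma brkt_mul_mul {γ : ℂ} (hγ : ‖γ‖ = 1) (x y : ℂ) : brkt (γ * x) (γ * y) = brkt x y := by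
  simp only [brkt, map_mul]
  linear_combination (x * conj y - y * conj x) * mul_conj_eq_one hγ

def NonParallel (x y : ℂ) : Prop := x ≠ y ∧ x ≠ -y

namespace NonParallel

variable {x y z : ℂ}

lemma symm (h : NonParallel x y) : NonParallel y x :=
  ⟨h.1.symm, fun e => h.2 (by rw [e, neg_neg])⟩

lemma neg_left (h : NonParallel x y) : NonParallel (-x) y :=
  ⟨fun e => h.2 (by rw [← e, neg_neg]), fun e => h.1 (neg_inj.mp e)⟩

lemma neg_right (h : NonParallel x y) : NonParallel x (-y) :=
  ⟨h.2, by rw [neg_neg]; exact h.1⟩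

lemma mul_left {γ : ℂ} (hγ : γ ≠ 0) (h : NonParallel x y) : NonParallel (γ * x) (γ * y) :=
  ⟨fun e => h.1 (mul_left_cancel₀ hγ e),
    fun e => h.2 (mul_left_cancel₀ hγ (by rw [e, mul_neg]))⟩

lemma of_not_left (hzx : ¬NonParallel z x) (h : NonParallel x y) : NonParallel z y := by
  unfold NonParallel at *
  grind

lemma brkt_ne_zero (hx : ‖x‖ = 1) (hy : ‖y‖ = 1) (h : NonParallel x y) : brkt x y ≠ 0 := by
  intro h0
  unfold brkt at h0
  have hsq : x ^ 2 = y ^ 2 := by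
    linear_combination x * y * h0 - x ^ 2 * mul_conj_eq_one hy + y ^ 2 * mul_conj_eq_one hx
  exact (sq_eq_sq_iff_eq_or_eq_neg.mp hsq).elim h.1 h.2

end NonParallel

def HasTransversalPairs (U : Set ℂ) : Prop :=
  ∀ γ : ℂ, ∃ δ ∈ U, ∃ ε ∈ U, NonParallel γ δ ∧ NonParallel γ ε ∧ NonParallel δ ε

lemma hasTransversalPairs_of_nonParallel {U : Set ℂ} {u v w : ℂ} (hu : u ∈ U) (hv : v ∈ U)
    (hw : w ∈ U) (huv : NonParallel u v) (huw : NonParallel u w) (hvw : NonParallel v w) :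
    HasTransversalPairs U := by
  intro γ
  by_cases hγu : NonParallel γ u
  · by_cases hγv : NonParallel γ v
    · exact ⟨u, hu, v, hv, hγu, hγv, huv⟩
    · exact ⟨u, hu, w, hw, hγu, NonParallel.of_not_left hγv hvw, huw⟩
  · exact ⟨v, hv, w, hw, NonParallel.of_not_left hγu huv,
      NonParallel.of_not_left hγu huw, hvw⟩

lemma lineInt_neg_left (α β p q : ℂ) : lineInt (-α) β p q = lineInt α β p q := by
  simp only [lineInt, brkt_neg_left, brkt_neg_right, div_neg, neg_div]
  ring

lemma lineInt_neg_right (α β p q : ℂ) : lineInt α (-β) p q = lineInt α β p q := by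
  simp only [lineInt, brkt_neg_left, brkt_neg_right, div_neg, neg_div]
  ring

lemma lineInt_zero_right (α β p : ℂ) : lineInt α β p 0 = brkt α p / brkt α β * β := by
  simp [lineInt, brkt]

lemma lineInt_zero_left (α β q : ℂ) : lineInt α β 0 q = brkt β q / brkt β α * α := by
  simp [lineInt, brkt]

lemma lineInt_eq_add (α β p q : ℂ) : lineInt α β p q = lineInt α β p 0 + lineInt α β 0 q := by
  rw [lineInt_zero_right, lineInt_zero_left, lineInt]

lemma lineInt_mul_mul {γ c : ℂ} (hγ : ‖γ‖ = 1) (hc : conj c = c) (α β p q : ℂ) :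
    lineInt (γ * α) (γ * β) (c * γ * p) (c * γ * q) = c * γ * lineInt α β p q := by
  simp only [lineInt, mul_assoc, brkt_mul_mul hγ, brkt_mul_right hc]
  ring

lemma lineInt_mul_self_mul {α β c d : ℂ} (hαβ : brkt α β ≠ 0) (hc : conj c = c)
    (hd : conj d = d) : lineInt α β (c * β) (d * α) = c * β + d * α := by
  have hβα : brkt β α ≠ 0 := by rwa [brkt_swap, neg_ne_zero]
  rw [lineInt, brkt_mul_right hc, brkt_mul_right hd, mul_div_assoc, mul_div_assoc,
    div_self hαβ, div_self hβα, mul_one, mul_one]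

lemma lineInt_self {α β : ℂ} (hαβ : brkt α β ≠ 0) (p : ℂ) : lineInt α β p p = p := by
  have hβα : brkt β α ≠ 0 := by rwa [brkt_swap, neg_ne_zero]
  rw [lineInt]
  field_simp
  unfold brkt
  ring

lemma lineInt_add_const {α β : ℂ} (hαβ : brkt α β ≠ 0) (p q c : ℂ) :
    lineInt α β (p + c) (q + c) = lineInt α β p q + c := by
  have hc := lineInt_self hαβ c
  simp only [lineInt, brkt_add_right] at hc ⊢
  linear_combination hc

lemma lineInt_same_dir {γ δ ε c d : ℂ} (hδγ : brkt δ γ ≠ 0) (hδε : brkt δ ε ≠ 0)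
    (hεγ : brkt ε γ ≠ 0) (hc : conj c = c) (hd : conj d = d) :
    lineInt δ γ (lineInt ε γ (d * γ) (lineInt δ ε (c * γ) 0)) 0 = (c + d) * γ := by
  set t := brkt δ γ / brkt δ ε with ht
  have hct : conj (c * t) = c * t := by rw [map_mul, hc, ht, conj_brkt_div]
  have hcε : lineInt δ ε (c * γ) 0 = c * t * ε := by
    rw [lineInt_zero_right, brkt_mul_right hc, ht]; ring
  rw [hcε, lineInt_mul_self_mul hεγ hd hct, lineInt_zero_right, brkt_add_right,
    brkt_mul_right hd, brkt_mul_right hct, ht]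
  field_simp
  ring

/-- Writing `1 = t δ + s ε`, the three constructed points are `t δ`, `t δ - 1 = -s ε` and `-1`. -/
lemma lineInt_neg_one {δ ε : ℂ} (hδε : brkt δ ε ≠ 0) (hε1 : brkt ε 1 ≠ 0) (h1δ : brkt 1 δ ≠ 0) :
    lineInt δ 1 (lineInt 1 ε (lineInt δ ε 0 1) 0) 0 = -1 := by
  set t := brkt ε 1 / brkt ε δ with ht
  set s := t * brkt 1 δ / brkt 1 ε with hs
  have htr : conj t = t := conj_brkt_div ..
  have hsr : conj s = s := by rw [hs, mul_div_assoc, map_mul, htr, conj_brkt_div]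
  have hP : lineInt δ ε 0 1 = t * δ := lineInt_zero_left ..
  have hQ : lineInt 1 ε (t * δ) 0 = s * ε := by rw [lineInt_zero_right, brkt_mul_right htr]
  have hX : lineInt δ 1 (s * ε) 0 = s * brkt δ ε / brkt δ 1 := by
    rw [lineInt_zero_right, brkt_mul_right hsr, mul_one, mul_div_assoc]
  rw [hP, hQ, hX, hs, ht, brkt_swap δ ε, brkt_swap ε 1, brkt_swap 1 δ]
  field_simp

section RU

variable {U : Set ℂ}

lemma zero_mem_RU : (0 : ℂ) ∈ RU U := Set.mem_iUnion.mpr ⟨0, Set.mem_insert _ _⟩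

lemma one_mem_RU : (1 : ℂ) ∈ RU U := Set.mem_iUnion.mpr ⟨0, Set.mem_insert_of_mem _ rfl⟩

lemma stepSet_monotone (hU : ∀ z ∈ U, ‖z‖ = 1) {α β : ℂ} (hα : α ∈ U) (hβ : β ∈ U)
    (hαβ : NonParallel α β) : Monotone (stepSet U) :=
  monotone_nat_of_le_succ fun _ z hz => ⟨α, hα, β, hβ, hαβ.1, hαβ.2, z, hz, z, hz,
    (lineInt_self (hαβ.brkt_ne_zero (hU α hα) (hU β hβ)) z).symm⟩

lemma lineInt_mem_RU (hU : ∀ z ∈ U, ‖z‖ = 1) {α β p q : ℂ} (hα : α ∈ U) (hβ : β ∈ U)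
    (hαβ : NonParallel α β) (hp : p ∈ RU U) (hq : q ∈ RU U) : lineInt α β p q ∈ RU U := by
  obtain ⟨m, hm⟩ := Set.mem_iUnion.mp hp
  obtain ⟨n, hn⟩ := Set.mem_iUnion.mp hq
  have hmono := stepSet_monotone hU hα hβ hαβ
  exact Set.mem_iUnion.mpr ⟨max m n + 1, α, hα, β, hβ, hαβ.1, hαβ.2,
    p, hmono (le_max_left m n) hm, q, hmono (le_max_right m n) hn, rfl⟩

lemma lineInt_mem_RU_of_neg_mem (hU : ∀ z ∈ U, ‖z‖ = 1) {α β p q : ℂ}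
    (hα : α ∈ U ∨ -α ∈ U) (hβ : β ∈ U ∨ -β ∈ U) (hαβ : NonParallel α β)
    (hp : p ∈ RU U) (hq : q ∈ RU U) : lineInt α β p q ∈ RU U := by
  rcases hα with hα | hα <;> rcases hβ with hβ | hβ
  · exact lineInt_mem_RU hU hα hβ hαβ hp hq
  · simpa only [lineInt_neg_right] using lineInt_mem_RU hU hα hβ hαβ.neg_right hp hq
  · simpa only [lineInt_neg_left] using lineInt_mem_RU hU hα hβ hαβ.neg_left hp hq
  · simpa only [lineInt_neg_left, lineInt_neg_right] using
      lineInt_mem_RU hU hα hβ hαβ.neg_left.neg_right hp hq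

@[elab_as_elim]
lemma RU_induction {P : ℂ → Prop} (zero : P 0) (one : P 1)
    (step : ∀ α ∈ U, ∀ β ∈ U, NonParallel α β → ∀ p ∈ RU U, ∀ q ∈ RU U,
      P p → P q → P (lineInt α β p q))
    {z : ℂ} (hz : z ∈ RU U) : P z := by
  obtain ⟨n, hn⟩ := Set.mem_iUnion.mp hz
  clear hz
  induction n generalizing z with
  | zero => rcases hn with rfl | rfl <;> assumption
  | succ n ih =>
    obtain ⟨α, hα, β, hβ, h1, h2, p, hp, q, hq, rfl⟩ := hn
    exact step α hα β hβ ⟨h1, h2⟩ p (Set.mem_iUnion.mpr ⟨n, hp⟩) q (Set.mem_iUnion.mpr ⟨n, hq⟩)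
      (ih hp) (ih hq)

def IsAxial (U : Set ℂ) (a : ℂ) : Prop :=
  a ∈ RU U ∧ ∃ c, conj c = c ∧ ∃ γ ∈ U, a = c * γ

lemma isAxial_zero (h1U : (1 : ℂ) ∈ U) : IsAxial U 0 :=
  ⟨zero_mem_RU, 0, map_zero _, 1, h1U, (zero_mul 1).symm⟩

lemma isAxial_one (h1U : (1 : ℂ) ∈ U) : IsAxial U 1 :=
  ⟨one_mem_RU, 1, map_one _, 1, h1U, (one_mul 1).symm⟩

lemma exists_isAxial_add (hU : ∀ z ∈ U, ‖z‖ = 1) (h1U : (1 : ℂ) ∈ U) {z : ℂ} (hz : z ∈ RU U) :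
    ∃ a b, IsAxial U a ∧ IsAxial U b ∧ z = a + b := by
  refine RU_induction ⟨0, 0, isAxial_zero h1U, isAxial_zero h1U, (add_zero 0).symm⟩
    ⟨1, 0, isAxial_one h1U, isAxial_zero h1U, (add_zero 1).symm⟩
    (fun α hα β hβ hαβ p hp q hq _ _ => ?_) hz
  refine ⟨_, _, ⟨lineInt_mem_RU hU hα hβ hαβ hp zero_mem_RU, _, conj_brkt_div .., β, hβ,
      lineInt_zero_right ..⟩, ⟨lineInt_mem_RU hU hα hβ hαβ zero_mem_RU hq, _, conj_brkt_div ..,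
      α, hα, lineInt_zero_left ..⟩, lineInt_eq_add ..⟩

lemma IsAxial.mul_mem (hU : ∀ z ∈ U, ‖z‖ = 1)
    (hmul : ∀ α ∈ U, ∀ β ∈ U, α * β ∈ U ∨ -(α * β) ∈ U) {a z : ℂ} (ha : IsAxial U a)
    (hz : z ∈ RU U) : a * z ∈ RU U := by
  obtain ⟨haR, c, hc, γ, hγ, rfl⟩ := ha
  have hγ0 : γ ≠ 0 := norm_ne_zero_iff.mp (by rw [hU γ hγ]; exact one_ne_zero)
  refine RU_induction (by simpa using zero_mem_RU) (by simpa using haR)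
    (fun α hα β hβ hαβ p _ q _ hp hq => ?_) hz
  rw [← lineInt_mul_mul (hU γ hγ) hc]
  exact lineInt_mem_RU_of_neg_mem hU (hmul γ hγ α hα) (hmul γ hγ β hβ) (hαβ.mul_left hγ0) hp hq

lemma add_mul_mem_RU (hU : ∀ z ∈ U, ‖z‖ = 1) (h3 : HasTransversalPairs U) {γ c d : ℂ}
    (hγ : γ ∈ U) (hc : conj c = c) (hd : conj d = d) (hcγ : c * γ ∈ RU U)
    (hdγ : d * γ ∈ RU U) : (c + d) * γ ∈ RU U := by
  obtain ⟨δ, hδ, ε, hε, hγδ, hγε, hδε⟩ := h3 γ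
  rw [← lineInt_same_dir (hγδ.symm.brkt_ne_zero (hU δ hδ) (hU γ hγ))
    (hδε.brkt_ne_zero (hU δ hδ) (hU ε hε)) (hγε.symm.brkt_ne_zero (hU ε hε) (hU γ hγ)) hc hd]
  exact lineInt_mem_RU hU hδ hγ hγδ.symm
    (lineInt_mem_RU hU hε hγ hγε.symm hdγ (lineInt_mem_RU hU hδ hε hδε hcγ zero_mem_RU))
    zero_mem_RU

lemma IsAxial.add_mem (hU : ∀ z ∈ U, ‖z‖ = 1) (h3 : HasTransversalPairs U) {a b : ℂ}
    (ha : IsAxial U a) (hb : IsAxial U b) : a + b ∈ RU U := by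
  obtain ⟨haR, c, hc, γ, hγ, rfl⟩ := ha
  obtain ⟨hbR, d, hd, γ', hγ', rfl⟩ := hb
  by_cases hγγ' : NonParallel γ' γ
  · rw [← lineInt_mul_self_mul (hγγ'.brkt_ne_zero (hU γ' hγ') (hU γ hγ)) hc hd]
    exact lineInt_mem_RU hU hγ' hγ hγγ' haR hbR
  · obtain rfl | rfl : γ' = γ ∨ γ' = -γ := by unfold NonParallel at hγγ'; tauto
    · rw [← add_mul]
      exact add_mul_mem_RU hU h3 hγ hc hd haR hbR
    · rw [mul_neg, ← neg_mul] at hbR ⊢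
      rw [← add_mul]
      exact add_mul_mem_RU hU h3 hγ hc (by rw [map_neg, hd]) haR hbR

lemma add_isAxial_mem_RU (hU : ∀ z ∈ U, ‖z‖ = 1) (h1U : (1 : ℂ) ∈ U) (h3 : HasTransversalPairs U)
    {z a : ℂ} (hz : z ∈ RU U) (ha : IsAxial U a) : z + a ∈ RU U := by
  refine RU_induction (by simpa using ha.1) ((isAxial_one h1U).add_mem hU h3 ha)
    (fun α hα β hβ hαβ p _ q _ hp hq => ?_) hz
  rw [← lineInt_add_const (hαβ.brkt_ne_zero (hU α hα) (hU β hβ))]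
  exact lineInt_mem_RU hU hα hβ hαβ hp hq

lemma add_mem_RU (hU : ∀ z ∈ U, ‖z‖ = 1) (h1U : (1 : ℂ) ∈ U) (h3 : HasTransversalPairs U)
    {x y : ℂ} (hx : x ∈ RU U) (hy : y ∈ RU U) : x + y ∈ RU U := by
  obtain ⟨a, b, ha, hb, rfl⟩ := exists_isAxial_add hU h1U hy
  rw [← add_assoc]
  exact add_isAxial_mem_RU hU h1U h3 (add_isAxial_mem_RU hU h1U h3 hx ha) hb

lemma mul_mem_RU (hU : ∀ z ∈ U, ‖z‖ = 1) (h1U : (1 : ℂ) ∈ U)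
    (hmul : ∀ α ∈ U, ∀ β ∈ U, α * β ∈ U ∨ -(α * β) ∈ U) (h3 : HasTransversalPairs U)
    {x y : ℂ} (hx : x ∈ RU U) (hy : y ∈ RU U) : x * y ∈ RU U := by
  obtain ⟨a, b, ha, hb, rfl⟩ := exists_isAxial_add hU h1U hx
  rw [add_mul]
  exact add_mem_RU hU h1U h3 (ha.mul_mem hU hmul hy) (hb.mul_mem hU hmul hy)

lemma neg_one_mem_RU (hU : ∀ z ∈ U, ‖z‖ = 1) (h1U : (1 : ℂ) ∈ U) (h3 : HasTransversalPairs U) :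
    (-1 : ℂ) ∈ RU U := by
  obtain ⟨δ, hδ, ε, hε, h1δ, h1ε, hδε⟩ := h3 1
  rw [← lineInt_neg_one (hδε.brkt_ne_zero (hU δ hδ) (hU ε hε))
    (h1ε.symm.brkt_ne_zero (hU ε hε) (hU 1 h1U)) (h1δ.brkt_ne_zero (hU 1 h1U) (hU δ hδ))]
  exact lineInt_mem_RU hU hδ h1U h1δ.symm
    (lineInt_mem_RU hU h1U hε h1ε (lineInt_mem_RU hU hδ hε hδε zero_mem_RU one_mem_RU)
      zero_mem_RU) zero_mem_RU

lemma neg_mem_RU (hU : ∀ z ∈ U, ‖z‖ = 1) (h1U : (1 : ℂ) ∈ U)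
    (hmul : ∀ α ∈ U, ∀ β ∈ U, α * β ∈ U ∨ -(α * β) ∈ U) (h3 : HasTransversalPairs U)
    {z : ℂ} (hz : z ∈ RU U) : -z ∈ RU U := by
  simpa using mul_mem_RU hU h1U hmul h3 (neg_one_mem_RU hU h1U h3) hz

end RU

theorem stmt4_general (U : Set ℂ) (hU : ∀ z ∈ U, ‖z‖ = 1) (h1U : (1 : ℂ) ∈ U)
    (hmul : ∀ α ∈ U, ∀ β ∈ U, α * β ∈ U ∨ -(α * β) ∈ U)
    (u v w : ℂ) (hu : u ∈ U) (hv : v ∈ U) (hw : w ∈ U)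
    (huv : u ≠ v) (huv' : u ≠ -v) (huw : u ≠ w) (huw' : u ≠ -w)
    (hvw : v ≠ w) (hvw' : v ≠ -w) :
    ∃ A : Subring ℂ, (A : Set ℂ) = RU U := by
  have h3 : HasTransversalPairs U :=
    hasTransversalPairs_of_nonParallel hu hv hw ⟨huv, huv'⟩ ⟨huw, huw'⟩ ⟨hvw, hvw'⟩
  exact ⟨{ carrier := RU U
           zero_mem' := zero_mem_RU
           one_mem' := one_mem_RU
           add_mem' := add_mem_RU hU h1U h3
           mul_mem' := mul_mem_RU hU h1U hmul h3
           neg_mem' := neg_mem_RU hU h1U hmul h3 }, rfl⟩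

/-- if `U` is a subgroup of `T/{±1}` containing three pairwise non-±-equal
elements, then `R(U)` is a subring of `ℂ`. -/
theorem stmt4 (U : Set ℂ) (hU : ∀ z ∈ U, ‖z‖ = 1) (h1U : (1 : ℂ) ∈ U)
    (hmul : ∀ α ∈ U, ∀ β ∈ U, α * β ∈ U ∨ -(α * β) ∈ U)
    (hinv : ∀ α ∈ U, α⁻¹ ∈ U ∨ -α⁻¹ ∈ U)
    (u v w : ℂ) (hu : u ∈ U) (hv : v ∈ U) (hw : w ∈ U)
    (huv : u ≠ v) (huv' : u ≠ -v) (huw : u ≠ w) (huw' : u ≠ -w)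
    (hvw : v ≠ w) (hvw' : v ≠ -w) :
    ∃ A : Subring ℂ, (A : Set ℂ) = RU U :=
  stmt4_general U hU h1U hmul u v w hu hv hw huv huv' huw huw' hvw hvw'
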